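/- Let (β_t^x)_{t≥0} be the aperiodic nearest-neighbors branching random walk on ℤ^d started by a single particle at x, and let p_n(x) = ℙ(τ_n^x < ∞). For every n ≥ 1 and all x, y in the intersection of the positive orthant ℤ₊^d with the interior Λ̊_n^d, if x ⪯ y then p_n(x) ≤ p_n(y). -/

import Mathlib

open scoped ENNReal
open MeasureTheory Filter

namespace BRW

/-- Sites of the lattice `ℤ^d`. -/
abbrev Site (d : ℕ) := Fin d → ℤ

/-- A configuration of particles: finitely many particles, `η z` particles at site `z`. -/
abbrev Config (d : ℕ) := Site d →₀ ℕ

noncomputable instance (d : ℕ) : MeasurableSpace (Config d) := ⊤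
noncomputable instance (d : ℕ) : MeasurableSpace (List (Config d)) := ⊤

instance (d : ℕ) : Inhabited (Config d) := ⟨0⟩

/-- Uniform distribution on a finite set (junk value if the set is empty). -/
noncomputable def unifOn {α : Type*} [Inhabited α] (s : Finset α) : PMF α :=
  if h : s.Nonempty then PMF.uniformOfFinset s h else PMF.pure default

/-- Bernoulli distribution (junk value if `p > 1`). -/
noncomputable def bern (p : ℝ≥0∞) : PMF Bool :=
  if h : p ≤ 1 then PMF.bernoulli p.toNNReal
    (by simpa using ENNReal.toNNReal_mono ENNReal.one_ne_top h) else PMF.pure true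

/-- Convolution of two `PMF`s on an additive monoid: the law of a sum of independent samples. -/
noncomputable def conv {α : Type*} [AddCommMonoid α] (p q : PMF α) : PMF α :=
  p.bind fun a => q.bind fun b => PMF.pure (a + b)

instance {α : Type*} [AddCommMonoid α] : Std.Commutative (conv (α := α)) where
  comm p q := by
    unfold conv
    rw [PMF.bind_comm]
    refine congrArg _ (funext fun b => congrArg _ (funext fun a => ?_))
    rw [add_comm]

instance {α : Type*} [AddCommMonoid α] : Std.Associative (conv (α := α)) where
  assoc p q r := by
    simp only [conv, PMF.bind_bind, PMF.pure_bind, add_assoc]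

/-- `n`-fold convolution: the law of a sum of `n` independent samples of `p`. -/
noncomputable def iterConv {α : Type*} [AddCommMonoid α] (p : PMF α) : ℕ → PMF α
  | 0 => PMF.pure 0
  | n + 1 => conv p (iterConv p n)

variable {d : ℕ}

/-- The nearest neighbors (`L¹`-distance exactly one) of a site. -/
def nbrs (z : Site d) : Finset (Site d) :=
  (Finset.univ ×ˢ ({1, -1} : Finset ℤ)).image fun p => Function.update z p.1 (z p.1 + p.2)

/-- Law of the configuration of children of one particle at `z`: a random number of offspring
distributed according to `P`, each placed independently and uniformly at random on `nbr z`. -/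
noncomputable def childLaw (P : PMF ℕ) (nbr : Site d → Finset (Site d)) (z : Site d) :
    PMF (Config d) :=
  P.bind fun n => iterConv ((unifOn (nbr z)).map fun w => Finsupp.single w 1) n

/-- Children law of the aperiodic walk: offspring are placed uniformly on the `2d+1` sites at
`L¹`-distance at most `1` from the parent. -/
noncomputable def aperiodicChild (P : PMF ℕ) (z : Site d) : PMF (Config d) :=
  childLaw P (fun w => insert w (nbrs w)) z

/-- Children law of the periodic walk: offspring are placed uniformly on the `2d` nearest
neighbors of the parent. -/
noncomputable def periodicChild (P : PMF ℕ) (z : Site d) : PMF (Config d) :=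
  childLaw P nbrs z

/-- Children law of the `π`-survival periodic walk: offspring placed uniformly on the nearest
neighbors, and in addition the particle itself survives with probability `π`, independently. -/
noncomputable def survChild (P : PMF ℕ) (π : ℝ≥0∞) (z : Site d) : PMF (Config d) :=
  conv (periodicChild P z) ((bern π).map fun b => if b then Finsupp.single z 1 else 0)

/-- One-step transition of a branching random walk with given children law: every particle
produces, independently of all other particles, a random children configuration. -/
noncomputable def stepOf (child : Site d → PMF (Config d)) (η : Config d) : PMF (Config d) :=
  Finset.fold conv (PMF.pure 0) (fun z => iterConv (child z) (η z)) η.support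

/-- One-step transition of the aperiodic nearest-neighbors branching random walk. -/
noncomputable def aperiodicStep (P : PMF ℕ) : Config d → PMF (Config d) :=
  stepOf (aperiodicChild P)

/-- One-step transition of the periodic nearest-neighbors branching random walk. -/
noncomputable def periodicStep (P : PMF ℕ) : Config d → PMF (Config d) :=
  stepOf (periodicChild P)

/-- One-step transition of the `π`-survival periodic nearest-neighbors branching random walk. -/
noncomputable def survStep (P : PMF ℕ) (π : ℝ≥0∞) : Config d → PMF (Config d) :=
  stepOf (survChild P π)

/-- The law of the configuration at time `t` of the Markov chain with one-step transition `step`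
started from configuration `init`. -/
noncomputable def timeLaw (step : Config d → PMF (Config d)) (init : Config d) :
    ℕ → PMF (Config d)
  | 0 => PMF.pure init
  | t + 1 => (timeLaw step init t).bind step

/-- The law of the trajectory up to time `t`, recorded as the list `[η_t, η_{t-1}, ..., η_0]`. -/
noncomputable def pathLaw (step : Config d → PMF (Config d)) (init : Config d) :
    ℕ → PMF (List (Config d))
  | 0 => PMF.pure [init]
  | t + 1 => (pathLaw step init t).bind fun l => (step l.headI).map fun c => c :: l

/-- `z ∈ ∂Λ_n`, the boundary of the hypercube `Λ_n = {z : ‖z‖_∞ ≤ n}`. -/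
def onBdry (n : ℕ) (z : Site d) : Prop :=
  (∀ i, |z i| ≤ (n : ℤ)) ∧ ∃ i, |z i| = (n : ℤ)

/-- `z ∈ Λ̊_n`, the interior of the hypercube `Λ_n`. -/
def inInterior (n : ℕ) (z : Site d) : Prop :=
  ∀ i, |z i| < (n : ℤ)

/-- The configuration `η` has no particle on `∂Λ_n`. -/
def avoids (n : ℕ) (η : Config d) : Prop :=
  ∀ z : Site d, onBdry n z → η z = 0

/-- `ℙ(τ_n > t)`: the probability that the branching random walk with one-step transition `step`
started from `init` puts no particle on `∂Λ_n` at any time `0, 1, ..., t`. -/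
noncomputable def survProb (step : Config d → PMF (Config d)) (init : Config d) (n t : ℕ) :
    ℝ≥0∞ :=
  (pathLaw step init t).toMeasure {l | ∀ c ∈ l, avoids n c}

/-- `p_n = ℙ(τ_n < ∞)`: the probability that some particle ever reaches `∂Λ_n`. -/
noncomputable def hitProb (step : Config d → PMF (Config d)) (init : Config d) (n : ℕ) : ℝ≥0∞ :=
  1 - ⨅ t : ℕ, survProb step init n t

/-- `ℙ(X(z) > k)` when the configuration `X` is distributed according to `p`. -/
noncomputable def tailProb (p : PMF (Config d)) (z : Site d) (k : ℕ) : ℝ≥0∞ :=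
  p.toMeasure {η | k < η z}

/-- The hitting time of `∂Λ_n` by a trajectory of configurations, valued in `ℕ ∪ {∞}`. -/
noncomputable def hitTime (n : ℕ) (f : ℕ → Config d) : ℕ∞ :=
  sInf ((fun t : ℕ => (t : ℕ∞)) '' {t | ¬ avoids n (f t)})

/-- The process `X` on the probability space `(Ω, Pr)` is a realization of (i.e., has the law of)
the branching random walk with one-step transition `step` started from `init`: for every `t`, the
trajectory up to time `t` has law `pathLaw step init t`. -/
def HasPathLaw {Ω : Type*} [MeasurableSpace Ω] (Pr : Measure Ω)
    (step : Config d → PMF (Config d)) (init : Config d) (X : ℕ → Ω → Config d) : Prop :=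
  ∀ t : ℕ, Measure.map (fun ω => (List.range (t + 1)).map fun s => X (t - s) ω) Pr
    = (pathLaw step init t).toMeasure

end BRW

/-!
The probability `u_t(z)` that one particle started at `z` has no descendant on `∂Λ_n` up to
time `t` is multiplicative over initial particles (branching property), hence satisfies
`u_{t+1}(z) = 1_{Λ̊_n}(z) · G(mean of u_t over the 2d+1 sites next to z)`, with `G` the generating
function of `𝒫`. For `|z_i| ≤ b`, replacing `z_i` by `b` reflects `z` in a hyperplane `x_i = c`
with `c ≥ 0`, to the side away from the origin. The same reflection matches the closed
neighbourhoods of the two points, except when they are adjacent along `i`, where the lazy step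
makes both neighbourhoods contain both points; so by induction on `t` the reflected point has the
smaller `u_t`. Increasing the coordinates of `x` one at a time to those of `y` is such a
reflection each time, so `u_t(y) ≤ u_t(x)` for all `t`.
-/

namespace BRW

open Function Finset

section Expectation

variable {α β : Type*}

noncomputable def expect (p : PMF α) (F : α → ℝ≥0∞) : ℝ≥0∞ := ∑' a, p a * F a

lemma expect_pure (a : α) (F : α → ℝ≥0∞) : expect (PMF.pure a) F = F a := by
  rw [expect, tsum_eq_single a fun b hb => by simp [PMF.pure_apply, hb]]
  simp

lemma expect_bind (p : PMF α) (f : α → PMF β) (F : β → ℝ≥0∞) :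
    expect (p.bind f) F = expect p fun a => expect (f a) F := by
  simp only [expect, PMF.bind_apply, ← ENNReal.tsum_mul_right, ← ENNReal.tsum_mul_left, mul_assoc]
  exact ENNReal.tsum_comm

lemma expect_map (p : PMF α) (g : α → β) (F : β → ℝ≥0∞) :
    expect (p.map g) F = expect p (F ∘ g) := by
  simp only [PMF.map, expect_bind, comp_apply, expect_pure]
  rfl

lemma expect_mul_const (p : PMF α) (F : α → ℝ≥0∞) (c : ℝ≥0∞) :
    expect p (fun a => F a * c) = expect p F * c := by
  simp only [expect, ← mul_assoc, ENNReal.tsum_mul_right]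

lemma expect_conv [AddCommMonoid α] (p q : PMF α) {F : α → ℝ≥0∞}
    (hF : ∀ a b, F (a + b) = F a * F b) : expect (conv p q) F = expect p F * expect q F := by
  simp only [conv, expect_bind, expect_pure, hF]
  simp_rw [expect, mul_left_comm (q _) (F _), ENNReal.tsum_mul_left, ← mul_assoc,
    ENNReal.tsum_mul_right]

lemma expect_iterConv [AddCommMonoid α] (p : PMF α) {F : α → ℝ≥0∞}
    (hF : ∀ a b, F (a + b) = F a * F b) (hF0 : F 0 = 1) (N : ℕ) :
    expect (iterConv p N) F = expect p F ^ N := by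
  induction N with
  | zero => simp [iterConv, expect_pure, hF0]
  | succ N ih => rw [iterConv, expect_conv _ _ hF, ih, pow_succ']

lemma toMeasure_eq_expect [MeasurableSpace α] (p : PMF α) {s : Set α} (hs : MeasurableSet s) :
    p.toMeasure s = expect p (s.indicator 1) := by
  rw [p.toMeasure_apply hs, expect]
  refine tsum_congr fun a => ?_
  by_cases ha : a ∈ s <;> simp [ha]

lemma expect_unifOn [Inhabited α] {s : Finset α} (hs : s.Nonempty) (F : α → ℝ≥0∞) :
    expect (unifOn s) F = (#s : ℝ≥0∞)⁻¹ * ∑ a ∈ s, F a := by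
  rw [unifOn, dif_pos hs, expect, tsum_eq_sum (s := s) fun a ha => by simp [ha], mul_sum]
  exact sum_congr rfl fun a ha => by simp [ha]

end Expectation

section ConvolutionMonoid

variable {α : Type*} [AddCommMonoid α]

lemma conv_pure_zero_left (p : PMF α) : conv (PMF.pure 0) p = p := by
  simp only [conv, PMF.pure_bind, zero_add, PMF.bind_pure]

noncomputable abbrev convCommMonoid : CommMonoid (PMF α) where
  mul := conv
  one := PMF.pure 0
  mul_assoc p q r := Std.Associative.assoc (op := conv) p q r
  one_mul := conv_pure_zero_left
  mul_one p := (Std.Commutative.comm (op := conv) p _).trans (conv_pure_zero_left p)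
  mul_comm p q := Std.Commutative.comm (op := conv) p q

attribute [local instance] convCommMonoid

lemma iterConv_eq_pow (p : PMF α) (n : ℕ) : iterConv p n = p ^ n := by
  induction n with
  | zero => rfl
  | succ n ih => rw [iterConv, ih, pow_succ']; rfl

variable {d : ℕ} (child : Site d → PMF (Config d))

lemma stepOf_eq_prod (η : Config d) : stepOf child η = η.prod fun z m => child z ^ m := by
  simp only [← iterConv_eq_pow]
  rfl

lemma stepOf_add (η ξ : Config d) :
    stepOf child (η + ξ) = conv (stepOf child η) (stepOf child ξ) := by
  simp only [stepOf_eq_prod]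
  exact Finsupp.prod_add_index' (fun _ => pow_zero _) fun _ _ _ => pow_add _ _ _

lemma stepOf_zero : stepOf child 0 = PMF.pure 0 := by
  rw [stepOf_eq_prod, Finsupp.prod_zero_index]
  rfl

lemma stepOf_single_one (z : Site d) : stepOf child (Finsupp.single z 1) = child z := by
  rw [stepOf_eq_prod, Finsupp.prod_single_index (h := fun z m => child z ^ m) (pow_zero _), pow_one]

end ConvolutionMonoid

section Survival

variable {d : ℕ} (step : Config d → PMF (Config d))

lemma ne_nil_of_mem_support_pathLaw {init : Config d} {t : ℕ} {l : List (Config d)}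
    (hl : l ∈ (pathLaw step init t).support) : l ≠ [] := by
  cases t with
  | zero => simp_all [pathLaw]
  | succ t =>
    simp only [pathLaw, PMF.mem_support_bind_iff, PMF.mem_support_map_iff] at hl
    obtain ⟨_, _, c, _, rfl⟩ := hl
    exact List.cons_ne_nil _ _

/-- The Markov property at the first step (`pathLaw` lists a trajectory newest-first). -/
lemma pathLaw_succ (init : Config d) (t : ℕ) :
    pathLaw step init (t + 1) = (step init).bind fun η => (pathLaw step η t).map (· ++ [init]) := by
  induction t with
  | zero => simp [pathLaw, PMF.map, Function.comp_def]
  | succ t ih =>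
    rw [pathLaw, ih, PMF.bind_bind]
    refine congrArg _ (funext fun η => ?_)
    rw [PMF.bind_map, pathLaw, PMF.map_bind]
    ext l
    simp only [PMF.bind_apply]
    refine tsum_congr fun l' => ?_
    by_cases hl' : l' ∈ (pathLaw step η t).support
    · obtain ⟨c, l'', rfl⟩ := List.exists_cons_of_ne_nil (ne_nil_of_mem_support_pathLaw step hl')
      simp [PMF.map_comp, Function.comp_def]
    · rw [(PMF.apply_eq_zero_iff _ _).mpr hl', zero_mul, zero_mul]

noncomputable def avoidInd (n : ℕ) : Config d → ℝ≥0∞ := {η | avoids n η}.indicator 1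

lemma survProb_eq_expect (init : Config d) (n t : ℕ) :
    survProb step init n t = expect (pathLaw step init t) fun l => (l.map (avoidInd n)).prod := by
  rw [survProb, toMeasure_eq_expect _ (MeasurableSpace.measurableSet_top)]
  congr with l
  induction l with
  | nil => simp
  | cons c l ih =>
    classical
    rw [List.map_cons, List.prod_cons, ← ih]
    by_cases hc : avoids n c <;> simp [avoidInd, Set.indicator_apply, hc]

lemma survProb_zero (init : Config d) (n : ℕ) : survProb step init n 0 = avoidInd n init := by
  simp [survProb_eq_expect, pathLaw, expect_pure]

lemma survProb_succ (init : Config d) (n t : ℕ) :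
    survProb step init n (t + 1)
      = avoidInd n init * expect (step init) fun η => survProb step η n t := by
  simp only [survProb_eq_expect, pathLaw_succ, expect_bind, expect_map, Function.comp_def,
    List.map_append, List.prod_append, List.map_singleton, List.prod_singleton, expect_mul_const]
  rw [mul_comm]

lemma avoidInd_add (n : ℕ) (η ξ : Config d) :
    avoidInd n (η + ξ) = avoidInd n η * avoidInd n ξ := by
  have : avoids n (η + ξ) ↔ avoids n η ∧ avoids n ξ := by
    simp only [avoids, Finsupp.add_apply, Nat.add_eq_zero_iff, imp_and, forall_and]
  by_cases hη : avoids n η <;> by_cases hξ : avoids n ξ <;>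
    simp [avoidInd, this, hη, hξ]

end Survival

section Branching

variable {d : ℕ} (child : Site d → PMF (Config d))

lemma survProb_stepOf_add (n t : ℕ) (η ξ : Config d) :
    survProb (stepOf child) (η + ξ) n t
      = survProb (stepOf child) η n t * survProb (stepOf child) ξ n t := by
  induction t generalizing η ξ with
  | zero => simp only [survProb_zero, avoidInd_add]
  | succ t ih =>
    rw [survProb_succ, survProb_succ, survProb_succ, stepOf_add, expect_conv _ _ ih, avoidInd_add]
    ring

lemma survProb_stepOf_zero (n t : ℕ) : survProb (stepOf child) 0 n t = 1 := by
  have h0 : avoidInd n (0 : Config d) = 1 := by simp [avoidInd, avoids]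
  induction t with
  | zero => rw [survProb_zero, h0]
  | succ t ih => rw [survProb_succ, stepOf_zero, expect_pure, ih, h0, one_mul]

end Branching

section KilledSurvival

variable {d : ℕ}

noncomputable def pgf (P : PMF ℕ) (s : ℝ≥0∞) : ℝ≥0∞ := ∑' N, P N * s ^ N

lemma pgf_mono (P : PMF ℕ) : Monotone (pgf P) := fun _ _ h =>
  ENNReal.tsum_le_tsum fun _ => by gcongr

lemma expect_childLaw (P : PMF ℕ) (nbr : Site d → Finset (Site d)) (z : Site d)
    {F : Config d → ℝ≥0∞} (hF : ∀ a b, F (a + b) = F a * F b) (hF0 : F 0 = 1) :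
    expect (childLaw P nbr z) F
      = pgf P (expect (unifOn (nbr z)) fun w => F (Finsupp.single w 1)) := by
  simp only [childLaw, expect_bind, expect_iterConv _ hF hF0, expect_map]
  rfl

noncomputable def killedSurv (P : PMF ℕ) (nbr : Site d → Finset (Site d)) (K : Set (Site d)) :
    ℕ → Site d → ℝ≥0∞
  | 0 => K.indicator 1
  | t + 1 => fun z => K.indicator 1 z * pgf P (expect (unifOn (nbr z)) (killedSurv P nbr K t))

lemma avoidInd_single (n : ℕ) (z : Site d) :
    avoidInd n (Finsupp.single z 1) = {w | ¬ onBdry n w}.indicator 1 z := by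
  have : avoids n (Finsupp.single z 1) ↔ ¬ onBdry n z := by
    simp only [avoids, Finsupp.single_apply, ite_eq_right_iff, one_ne_zero, imp_false]
    exact ⟨fun h hz => h z hz rfl, fun h w hw hzw => h (hzw ▸ hw)⟩
  by_cases hz : onBdry n z <;> simp [avoidInd, this, hz]

lemma survProb_single_childLaw (P : PMF ℕ) (nbr : Site d → Finset (Site d)) (n t : ℕ)
    (z : Site d) :
    survProb (stepOf (childLaw P nbr)) (Finsupp.single z 1) n t
      = killedSurv P nbr {w | ¬ onBdry n w} t z := by
  induction t generalizing z with
  | zero => rw [survProb_zero, avoidInd_single]; rfl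
  | succ t ih =>
    rw [survProb_succ, stepOf_single_one,
      expect_childLaw _ _ _ (survProb_stepOf_add _ n t) (survProb_stepOf_zero _ n t),
      avoidInd_single]
    simp only [ih]
    rfl

lemma killedSurv_congr (P : PMF ℕ) {nbr : Site d → Finset (Site d)} {K₁ K₂ S : Set (Site d)}
    (hne : ∀ z, (nbr z).Nonempty) (hK : ∀ z ∈ S, z ∈ K₁ ↔ z ∈ K₂)
    (hS : ∀ z ∈ S, z ∈ K₁ → ∀ w ∈ nbr z, w ∈ S) (t : ℕ) {z : Site d} (hz : z ∈ S) :
    killedSurv P nbr K₁ t z = killedSurv P nbr K₂ t z := by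
  have hind : ∀ z ∈ S, K₁.indicator (1 : Site d → ℝ≥0∞) z = K₂.indicator 1 z := by
    classical
    intro z hz
    simp only [Set.indicator_apply, hK z hz]
  induction t generalizing z with
  | zero => exact hind z hz
  | succ t ih =>
    by_cases hz₁ : z ∈ K₁
    · simp only [killedSurv, hind z hz, expect_unifOn (hne z)]
      rw [sum_congr rfl fun w hw => ih (hS z hz hz₁ w hw)]
    · simp [killedSurv, hz₁, (hK z hz).not.mp hz₁]

end KilledSurvival

section Neighbours

variable {d : ℕ}

def closedNbrs (z : Site d) : Finset (Site d) := insert z (nbrs z)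

lemma update_add_injOn (z : Site d) :
    Set.InjOn (fun p : Fin d × ℤ => update z p.1 (z p.1 + p.2))
      (univ ×ˢ ({1, -1} : Finset ℤ) : Finset (Fin d × ℤ)) := by
  rintro ⟨j, ε⟩ hj ⟨k, δ⟩ hk h
  simp only [coe_product, coe_univ, Set.mem_prod, Set.mem_univ, true_and, coe_insert,
    coe_singleton, Set.mem_insert_iff, Set.mem_singleton_iff] at hj hk h
  obtain rfl : j = k := by
    by_contra hjk
    have := congrFun h j
    rw [update_self, update_of_ne hjk] at this
    omega
  have := congrFun h j
  simp only [update_self, add_right_inj] at this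
  rw [this]

lemma notMem_nbrs_self (z : Site d) : z ∉ nbrs z := by
  simp only [nbrs, mem_image, mem_product, mem_univ, true_and, mem_insert, mem_singleton,
    Prod.exists, not_exists, not_and]
  intro j ε hε h
  have := congrFun h j
  rw [update_self] at this
  omega

lemma sum_closedNbrs {M : Type*} [AddCommMonoid M] (f : Site d → M) (z : Site d) :
    ∑ w ∈ closedNbrs z, f w
      = f z + ∑ j, (f (update z j (z j + 1)) + f (update z j (z j - 1))) := by
  rw [closedNbrs, sum_insert (notMem_nbrs_self z), nbrs, sum_image (update_add_injOn z),
    sum_product]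
  simp [sub_eq_add_neg]

lemma card_closedNbrs (z : Site d) : #(closedNbrs z) = 2 * d + 1 := by
  rw [card_eq_sum_ones, sum_closedNbrs]
  simp only [sum_const, card_univ, Fintype.card_fin, smul_eq_mul]
  ring

lemma abs_sub_le_one_of_mem_closedNbrs {z w : Site d} (hw : w ∈ closedNbrs z) (j : Fin d) :
    |w j - z j| ≤ 1 := by
  rcases mem_insert.mp hw with rfl | hw
  · simp
  simp only [nbrs, mem_image, mem_product, mem_univ, true_and, mem_insert, mem_singleton,
    Prod.exists] at hw
  obtain ⟨k, ε, hε, rfl⟩ := hw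
  by_cases hjk : j = k
  · subst hjk
    rw [update_self, add_sub_cancel_left]
    rcases hε with rfl | rfl <;> simp
  · simp [update_of_ne hjk]

lemma not_onBdry_iff_inInterior {n : ℕ} {z : Site d} (hz : ∀ j, |z j| ≤ n) :
    ¬ onBdry n z ↔ inInterior n z := by
  simp only [onBdry, inInterior, hz, implies_true, true_and, not_exists]
  exact forall_congr' fun j => (hz j).lt_iff_ne.symm

lemma survProb_aperiodicStep_single (P : PMF ℕ) {n : ℕ} {z : Site d} (hz : ∀ j, |z j| ≤ n)
    (t : ℕ) :
    survProb (aperiodicStep P) (Finsupp.single z 1) n t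
      = killedSurv P closedNbrs {w | inInterior n w} t z := by
  refine (survProb_single_childLaw P closedNbrs n t z).trans <|
    killedSurv_congr P (S := {w | ∀ j, |w j| ≤ n}) (fun z => insert_nonempty _ _)
      (fun w hw => not_onBdry_iff_inInterior hw) (fun w hw hw' v hv j => ?_) t hz
  have h₁ := abs_sub_le_one_of_mem_closedNbrs hv j
  have h₂ := (not_onBdry_iff_inInterior hw).mp hw' j
  rw [abs_le] at h₁ ⊢
  rw [abs_lt] at h₂
  omega

end Neighbours

section Reflection

variable {d : ℕ}

def OutwardAntitone {α : Type*} [Preorder α] (f : Site d → α) : Prop :=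
  ∀ z i b, |z i| ≤ b → f (update z i b) ≤ f z

section OrderedMonoid

variable {M : Type*} [AddCommMonoid M] [PartialOrder M] [IsOrderedAddMonoid M]

lemma add_add_le_of_abs_le {g : ℤ → M} (hg : ∀ a b, |a| ≤ b → g b ≤ g a) {a b : ℤ}
    (hab : |a| ≤ b) : g b + (g (b + 1) + g (b - 1)) ≤ g a + (g (a + 1) + g (a - 1)) := by
  have hg' : ∀ a' b', -b' ≤ a' → a' ≤ b' → g b' ≤ g a' := fun a' b' h₁ h₂ =>
    hg a' b' (abs_le.mpr ⟨h₁, h₂⟩)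
  rw [abs_le] at hab
  rcases (by omega : b = a ∨ b = a + 1 ∨ a + 2 ≤ b) with rfl | rfl | hb
  · rfl
  · rw [add_sub_cancel_right]
    calc g (a + 1) + (g (a + 1 + 1) + g a) = g a + (g (a + 1) + g (a + 1 + 1)) := by abel
      _ ≤ g a + (g (a + 1) + g (a - 1)) := by gcongr; exact hg' _ _ (by omega) (by omega)
  · calc g b + (g (b + 1) + g (b - 1)) ≤ g a + (g (a - 1) + g (a + 1)) := by
          gcongr <;> exact hg' _ _ (by omega) (by omega)
      _ = g a + (g (a + 1) + g (a - 1)) := by rw [add_comm (g (a - 1))]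

lemma OutwardAntitone.sum_closedNbrs {f : Site d → M} (hf : OutwardAntitone f) :
    OutwardAntitone fun z => ∑ w ∈ closedNbrs z, f w := by
  intro z i b hb
  simp only [BRW.sum_closedNbrs, ← add_sum_erase _ _ (mem_univ i), ← add_assoc]
  gcongr ?_ + ?_
  · simpa only [update_self, update_idem, update_eq_self, add_assoc] using
      add_add_le_of_abs_le (g := fun c => f (update z i c))
        (fun a c hac => by simpa only [update_idem] using hf (update z i a) i c (by simpa))
        hb
  · refine sum_le_sum fun j hj => ?_
    have hji := ne_of_mem_erase hj
    have key : ∀ c, f (update (update z i b) j c) ≤ f (update z j c) := fun c => by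
      rw [update_comm hji.symm]
      exact hf _ i b (by rwa [update_of_ne hji.symm])
    rw [update_of_ne hji]
    exact add_le_add (key _) (key _)

end OrderedMonoid

lemma OutwardAntitone.expect_unifOn_closedNbrs {f : Site d → ℝ≥0∞} (hf : OutwardAntitone f) :
    OutwardAntitone fun z => expect (unifOn (closedNbrs z)) f := by
  intro z i b hb
  simp only [expect_unifOn (s := closedNbrs _) (insert_nonempty _ _), card_closedNbrs]
  exact mul_le_mul_of_nonneg_left (hf.sum_closedNbrs z i b hb) zero_le

lemma inInterior_of_update {n : ℕ} {z : Site d} {i : Fin d} {b : ℤ} (hb : |z i| ≤ b)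
    (h : inInterior n (update z i b)) : inInterior n z := by
  intro j
  rcases eq_or_ne j i with rfl | hj
  · have := h j
    rw [update_self] at this
    exact hb.trans_lt ((le_abs_self b).trans_lt this)
  · simpa [update_of_ne hj] using h j

lemma outwardAntitone_killedSurv (P : PMF ℕ) (n t : ℕ) :
    OutwardAntitone (killedSurv P closedNbrs {w : Site d | inInterior n w} t) := by
  intro z i b hb
  by_cases h : inInterior n (update z i b)
  · have hz : z ∈ {w : Site d | inInterior n w} := inInterior_of_update hb h
    cases t with
    | zero => simp [killedSurv, h, hz]
    | succ t =>
      simp only [killedSurv, Set.indicator_of_mem (show _ ∈ {w | inInterior n w} from h),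
        Set.indicator_of_mem hz, Pi.one_apply, one_mul]
      exact pgf_mono P ((outwardAntitone_killedSurv P n t).expect_unifOn_closedNbrs z i b hb)
  · cases t <;> simp [killedSurv, h]

lemma OutwardAntitone.apply_le_of_nonneg_of_le {α : Type*} [Preorder α] {f : Site d → α}
    (hf : OutwardAntitone f) {v w : Site d} (hv : 0 ≤ v) (hvw : v ≤ w) : f w ≤ f v := by
  suffices ∀ s : Finset (Fin d), ∀ v, 0 ≤ v → v ≤ w → (∀ j ∉ s, v j = w j) → f w ≤ f v from
    this univ v hv hvw (by simp)
  intro s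
  induction s using Finset.induction_on with
  | empty =>
    intro v _ _ hvw
    rw [funext fun j => (hvw j (notMem_empty j)).symm]
  | insert i s _ ih =>
    intro v hv hvw hout
    refine (ih (update v i (w i)) ?_ ?_ ?_).trans (hf v i (w i) ?_)
    · exact le_update_iff.mpr ⟨(hv i).trans (hvw i), fun j _ => hv j⟩
    · exact update_le_iff.mpr ⟨le_rfl, fun j _ => hvw j⟩
    · intro j hj
      rcases eq_or_ne j i with rfl | hji
      · exact update_self ..
      · rw [update_of_ne hji]
        exact hout j (by simp [hji, hj])
    · rw [abs_of_nonneg (hv i)]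
      exact hvw i

end Reflection

theorem aperiodic_escapeProb_monotone_general
    (d : ℕ) (P : PMF ℕ) (n : ℕ)
    (x y : Site d) (hx0 : 0 ≤ x) (hxy : x ≤ y)
    (hx : inInterior n x) (hy : inInterior n y) :
    hitProb (aperiodicStep P) (Finsupp.single x 1) n
      ≤ hitProb (aperiodicStep P) (Finsupp.single y 1) n := by
  have hsurv (t : ℕ) : survProb (aperiodicStep P) (Finsupp.single y 1) n t
      ≤ survProb (aperiodicStep P) (Finsupp.single x 1) n t := by
    rw [survProb_aperiodicStep_single P (fun j => (hx j).le),
      survProb_aperiodicStep_single P (fun j => (hy j).le)]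
    exact (outwardAntitone_killedSurv P n t).apply_le_of_nonneg_of_le hx0 hxy
  exact tsub_le_tsub_left (iInf_mono hsurv) 1

/-- For the aperiodic nearest-neighbors branching random walk on `ℤ^d`
with offspring distribution `P`, for every `n ≥ 1` and all `x ⪯ y` in the intersection of the
positive orthant with the interior of `Λ_n`, we have `p_n(x) ≤ p_n(y)`. -/
theorem aperiodic_escapeProb_monotone
    (d : ℕ) (hd : 0 < d) (P : PMF ℕ) (n : ℕ) (hn : 1 ≤ n)
    (x y : Site d) (hx0 : 0 ≤ x) (hy0 : 0 ≤ y) (hxy : x ≤ y)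
    (hx : inInterior n x) (hy : inInterior n y) :
    hitProb (aperiodicStep P) (Finsupp.single x 1) n
      ≤ hitProb (aperiodicStep P) (Finsupp.single y 1) n :=
  aperiodic_escapeProb_monotone_general d P n x y hx0 hxy hx hy

end BRW
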